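/- Let κ ∈ Γ₂ with κ₁ ≥ ... ≥ κₙ, and suppose |κⱼ| ≤ C₀·κ₁^{−1} for all j ∈ {2,...,n} and some constant C₀ > 0. Then σ₃(κ) ≥ −Ã, where Ã depends only on n and C₀; in particular σ₃(κ) = ∑_{i<j<l} κᵢκⱼκ_l is bounded below independently of κ₁. -/
import Mathlib

open Finset

noncomputable def s1 {n : ℕ} (x : Fin n → ℝ) : ℝ := ∑ i, x i

noncomputable def s2 {n : ℕ} (x : Fin n → ℝ) : ℝ :=
  ((∑ i, x i) ^ 2 - ∑ i, (x i) ^ 2) / 2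

noncomputable def s3 {n : ℕ} (x : Fin n → ℝ) : ℝ :=
  ((∑ i, x i) ^ 3 - 3 * (∑ i, x i) * (∑ i, (x i) ^ 2) + 2 * ∑ i, (x i) ^ 3) / 6

def Gamma2 {n : ℕ} : Set (Fin n → ℝ) := {x | 0 < s1 x ∧ 0 < s2 x}

def Gamma3 {n : ℕ} : Set (Fin n → ℝ) := {x | 0 < s1 x ∧ 0 < s2 x ∧ 0 < s3 x}

private lemma cube_lb {a b : ℝ} (hb : 0 ≤ b) (h : |a| ≤ b) : -b ^ 3 ≤ a ^ 3 := by
  have h1 : -b ≤ a := neg_le_of_abs_le h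
  have h2 : a ≤ b := le_of_abs_le h
  nlinarith [sq_nonneg (a + b), sq_nonneg (a - b), sq_nonneg a]

theorem stmt_12 (n : ℕ) (hn : 2 ≤ n) (C0 : ℝ) (hC0 : 0 < C0) :
    ∃ Atil : ℝ, ∀ κ : Fin n → ℝ,
      (∀ i j : Fin n, i ≤ j → κ j ≤ κ i) → κ ∈ Gamma2 →
      (∀ j : Fin n, j ≠ ⟨0, by omega⟩ → |κ j| ≤ C0 * (κ ⟨0, by omega⟩)⁻¹) →
      -Atil ≤ s3 κ := by
  set M : ℝ := Real.sqrt (n * C0) with hM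
  have hM0 : 0 ≤ M := Real.sqrt_nonneg _
  refine ⟨n * C0 * M + n ^ 3 * M ^ 3 + 3 * n ^ 2 * M ^ 3 + 2 * n * M ^ 3, ?_⟩
  intro κ hsort hG2 hbd
  obtain ⟨hs1, hs2⟩ := hG2
  set e0 : Fin n := ⟨0, by omega⟩ with he0
  have hnR : (1 : ℝ) ≤ n := by exact_mod_cast Nat.one_le_of_lt hn
  -- each κ i ≤ κ e0
  have hle : ∀ i : Fin n, κ i ≤ κ e0 := fun i => hsort e0 i (by
    simp [he0, Fin.le_def])
  -- sum ≤ n * κ e0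
  have hsum_le : (∑ i, κ i) ≤ n * κ e0 := by
    calc (∑ i, κ i) ≤ ∑ _i : Fin n, κ e0 := Finset.sum_le_sum (fun i _ => hle i)
    _ = n * κ e0 := by simp [mul_comm]
  have hs1' : 0 < ∑ i, κ i := hs1
  have hk0 : 0 < κ e0 := by nlinarith
  -- |κ j| ≤ n * κ e0 for all j, from s2 > 0
  have hs2' : (∑ i, (κ i) ^ 2) < (∑ i, κ i) ^ 2 := by
    have := hs2
    unfold s2 at this
    linarith
  have hbig : ∀ j : Fin n, |κ j| ≤ n * κ e0 := by
    intro j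
    have h1 : (κ j) ^ 2 ≤ ∑ i, (κ i) ^ 2 :=
      Finset.single_le_sum (fun i _ => sq_nonneg (κ i)) (Finset.mem_univ j)
    have h2 : (∑ i, κ i) ^ 2 ≤ (n * κ e0) ^ 2 := by nlinarith
    have h3 : (κ j) ^ 2 ≤ (n * κ e0) ^ 2 := by linarith
    have h4 : 0 ≤ n * κ e0 := by positivity
    nlinarith [abs_nonneg (κ j), sq_abs (κ j)]
  -- for j ≠ e0 : κ e0 * |κ j| ≤ C0 and |κ j| ≤ M
  have hkC : ∀ j : Fin n, j ≠ e0 → κ e0 * |κ j| ≤ C0 := by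
    intro j hj
    have := hbd j hj
    calc κ e0 * |κ j| ≤ κ e0 * (C0 * (κ e0)⁻¹) := by
          apply mul_le_mul_of_nonneg_left this hk0.le
    _ = C0 := by field_simp
  have hMb : ∀ j : Fin n, j ≠ e0 → |κ j| ≤ M := by
    intro j hj
    have h1 : |κ j| ^ 2 ≤ n * C0 := by
      have := hkC j hj
      have h2 := hbig j
      nlinarith [abs_nonneg (κ j)]
    have := Real.sqrt_le_sqrt h1
    calc |κ j| = Real.sqrt (|κ j| ^ 2) := by
          rw [Real.sqrt_sq (abs_nonneg _)]
    _ ≤ M := this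
  -- split sums at e0
  set t : Finset (Fin n) := Finset.univ.erase e0 with ht
  have hcard : (t.card : ℝ) ≤ n := by
    have : t.card ≤ (Finset.univ : Finset (Fin n)).card :=
      Finset.card_le_card (Finset.erase_subset _ _)
    simp only [Finset.card_univ, Fintype.card_fin] at this
    exact_mod_cast this
  set S : ℝ := ∑ j ∈ t, κ j with hS
  set Q : ℝ := ∑ j ∈ t, (κ j) ^ 2 with hQ
  set R : ℝ := ∑ j ∈ t, (κ j) ^ 3 with hR
  have hsplit1 : (∑ i, κ i) = κ e0 + S :=
    (Finset.add_sum_erase _ _ (Finset.mem_univ e0)).symm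
  have hsplit2 : (∑ i, (κ i) ^ 2) = (κ e0) ^ 2 + Q :=
    (Finset.add_sum_erase _ _ (Finset.mem_univ e0)).symm
  have hsplit3 : (∑ i, (κ i) ^ 3) = (κ e0) ^ 3 + R :=
    (Finset.add_sum_erase _ _ (Finset.mem_univ e0)).symm
  have hmem : ∀ j ∈ t, j ≠ e0 := fun j hj => Finset.ne_of_mem_erase hj
  -- bounds
  have hSabs : |S| ≤ n * M := by
    calc |S| ≤ ∑ j ∈ t, |κ j| := Finset.abs_sum_le_sum_abs _ _
    _ ≤ ∑ _j ∈ t, M := Finset.sum_le_sum (fun j hj => hMb j (hmem j hj))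
    _ = t.card * M := by simp [mul_comm]
    _ ≤ n * M := mul_le_mul_of_nonneg_right hcard hM0
  have hQ0 : 0 ≤ Q := Finset.sum_nonneg (fun j _ => sq_nonneg _)
  have hQb : Q ≤ n * M ^ 2 := by
    calc Q ≤ ∑ _j ∈ t, M ^ 2 := Finset.sum_le_sum (fun j hj => by
          have := hMb j (hmem j hj)
          nlinarith [abs_nonneg (κ j), sq_abs (κ j)])
    _ = t.card * M ^ 2 := by simp [mul_comm]
    _ ≤ n * M ^ 2 := mul_le_mul_of_nonneg_right hcard (sq_nonneg M)
  have hk0Q : κ e0 * Q ≤ n * (C0 * M) := by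
    calc κ e0 * Q = ∑ j ∈ t, κ e0 * (κ j) ^ 2 := by rw [hQ, Finset.mul_sum]
    _ ≤ ∑ _j ∈ t, C0 * M := Finset.sum_le_sum (fun j hj => by
          have h1 := hkC j (hmem j hj)
          have h2 := hMb j (hmem j hj)
          have h3 : κ e0 * (κ j) ^ 2 = (κ e0 * |κ j|) * |κ j| := by
            rw [← sq_abs]; ring
          rw [h3]
          have h4 : 0 ≤ κ e0 * |κ j| := by positivity
          exact mul_le_mul h1 h2 (abs_nonneg _) hC0.le)
    _ = t.card * (C0 * M) := by simp [mul_comm]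
    _ ≤ n * (C0 * M) := mul_le_mul_of_nonneg_right hcard (by positivity)
  have hRabs : |R| ≤ n * M ^ 3 := by
    calc |R| ≤ ∑ j ∈ t, |(κ j) ^ 3| := Finset.abs_sum_le_sum_abs _ _
    _ ≤ ∑ _j ∈ t, M ^ 3 := Finset.sum_le_sum (fun j hj => by
          have := hMb j (hmem j hj)
          rw [abs_pow]
          exact pow_le_pow_left₀ (abs_nonneg _) this 3)
    _ = t.card * M ^ 3 := by simp [mul_comm]
    _ ≤ n * M ^ 3 := mul_le_mul_of_nonneg_right hcard (pow_nonneg hM0 3)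
  -- identity
  have hid : 6 * s3 κ = 3 * κ e0 * S ^ 2 - 3 * (κ e0 * Q) + S ^ 3 - 3 * S * Q + 2 * R := by
    unfold s3
    rw [hsplit1, hsplit2, hsplit3]
    ring
  -- piecewise lower bounds
  have hS3 : -(n * M) ^ 3 ≤ S ^ 3 := cube_lb (by positivity) hSabs
  have hSQ : S * Q ≤ (n * M) * (n * M ^ 2) := by
    calc S * Q ≤ |S| * Q := mul_le_mul_of_nonneg_right (le_abs_self S) hQ0
    _ ≤ (n * M) * (n * M ^ 2) := mul_le_mul hSabs hQb hQ0 (by positivity)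
  have hR' : -(n * M ^ 3) ≤ R := neg_le_of_abs_le hRabs
  have hpos : 0 ≤ 3 * κ e0 * S ^ 2 := by positivity
  have e1 : (n * M) ^ 3 = n ^ 3 * M ^ 3 := by ring
  have e2 : (n * M) * (n * M ^ 2) = n ^ 2 * M ^ 3 := by ring
  have e3 : (n : ℝ) * (C0 * M) = n * C0 * M := by ring
  have p1 : (0:ℝ) ≤ n * C0 * M := by positivity
  have p2 : (0:ℝ) ≤ n ^ 3 * M ^ 3 := by positivity
  have p3 : (0:ℝ) ≤ n ^ 2 * M ^ 3 := by positivity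
  have p4 : (0:ℝ) ≤ n * M ^ 3 := by positivity
  linarith
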